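/- Let d ≥ 2 and n ≥ 2d+1. Then σ⁻¹(C_n^d) = d(d+1). -/

import Mathlib

/-- A coloring `f : V → Fin 2` is balanced if its two color class sizes differ by at most 1. -/
def BalancedColoring {V : Type*} (f : V → Fin 2) : Prop :=
  (Nat.card {v | f v = 0} : ℤ) - (Nat.card {v | f v = 1} : ℤ) ≤ 1 ∧
  (Nat.card {v | f v = 1} : ℤ) - (Nat.card {v | f v = 0} : ℤ) ≤ 1

/-- The set `g(f)` of bichromatic edges of `G` under the coloring `f`. -/
def bichromatic {V : Type*} (G : SimpleGraph V) (f : V → Fin 2) : Set (Sym2 V) :=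
  {e | e ∈ G.edgeSet ∧ Sym2.lift ⟨fun a b => f a ≠ f b, fun a b => by simp [ne_comm]⟩ e}

/-- `|g(f)|`, the number of bichromatic edges. -/
noncomputable def mixedCount {V : Type*} (G : SimpleGraph V) (f : V → Fin 2) : ℕ :=
  (bichromatic G f).ncard

/-- The rna number / minimum bisection width `σ⁻¹(G)`. -/
noncomputable def rna {V : Type*} (G : SimpleGraph V) : ℕ :=
  sInf {k | ∃ f : V → Fin 2, BalancedColoring f ∧ mixedCount G f = k}

/-- The `d`-th power of the cycle `C_n`, with vertex set `ZMod n`. -/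
def cyclePow (n d : ℕ) : SimpleGraph (ZMod n) where
  Adj u v := u ≠ v ∧ ∃ j : ℕ, 1 ≤ j ∧ j ≤ d ∧ (v = u + (j : ZMod n) ∨ u = v + (j : ZMod n))
  symm := by
    refine ⟨?_⟩
    rintro u v ⟨h, j, h1, h2, h3⟩
    exact ⟨h.symm, j, h1, h2, h3.symm⟩
  loopless := by refine ⟨?_⟩; rintro u ⟨h, -⟩; exact h rfl

/-!
Lower bound. Deleting a vertex `w` of `C_{m+1}^d` (`m ≥ 2d`) and joining the `d` pairs of its
neighbours at distance `d + 1` across it gives `C_m^d`. A new edge is bichromatic only if one of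
its ends differs in colour from `w`, so it can be charged to a distinct deleted edge at `w`, and the
number of bichromatic edges does not grow. Since rotations are automorphisms, any vertex can be
deleted; deleting vertices of the larger colour class reduces a balanced colouring of `C_n^d` to one
of `C_{2d+1}^d = K_{2d+1}` with classes of sizes `d` and `d + 1`, which has `d (d + 1)` bichromatic
edges.

Upper bound. Colouring two arcs of sizes `⌊n/2⌋` and `⌈n/2⌉` cuts `2 (1 + ⋯ + d) = d (d + 1)` edges.
-/

open Finset

section CycleCut

variable {α : Type*} [DecidableEq α]

/-- The bichromatic edges of `C_n^d` under `x`, with vertex `i` of `C_n^d` labelled by `i < n`: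
an edge is a pair `i < j` with `j - i ≤ d` or `n - (j - i) ≤ d`. -/
def cycleCut (n d : ℕ) (x : ℕ → α) : Finset (ℕ × ℕ) :=
  {p ∈ range n ×ˢ range n | p.1 < p.2 ∧ (p.2 ≤ p.1 + d ∨ n + p.1 ≤ p.2 + d) ∧ x p.1 ≠ x p.2}

theorem mem_cycleCut {n d : ℕ} {x : ℕ → α} {p : ℕ × ℕ} :
    p ∈ cycleCut n d x ↔
      p.2 < n ∧ p.1 < p.2 ∧ (p.2 ≤ p.1 + d ∨ n + p.1 ≤ p.2 + d) ∧ x p.1 ≠ x p.2 := by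
  simp only [cycleCut, mem_filter, mem_product, mem_range]
  constructor
  · rintro ⟨⟨-, h⟩, h'⟩; exact ⟨h, h'⟩
  · rintro ⟨h, h'⟩; exact ⟨⟨h'.1.trans h, h⟩, h'⟩

theorem cycleCut_congr {n d : ℕ} {x y : ℕ → α} (h : ∀ i < n, x i = y i) :
    cycleCut n d x = cycleCut n d y :=
  filter_congr fun p hp => by
    rw [mem_product, mem_range, mem_range] at hp
    rw [h _ hp.1, h _ hp.2]

/-- The edges of `C_m^d` that are not edges of `C_{m+1}^d` are the pairs `(j - (m - d), j)`; a
bichromatic one is sent to the edge joining `m` to an end of a different colour from `m`. -/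
theorem card_cycleCut_le_succ {m d : ℕ} (hm : 2 * d ≤ m) (x : ℕ → α) :
    #(cycleCut m d x) ≤ #(cycleCut (m + 1) d x) := by
  refine card_le_card_of_injOn
    (fun p => if p.2 ≤ p.1 + d ∨ m + 1 + p.1 ≤ p.2 + d then p
      else if x p.1 ≠ x m then (p.1, m) else (p.2, m)) ?_
    (Set.LeftInvOn.injOn (f₁' := fun q => if q.2 < m then q
      else if q.1 < d then (q.1, q.1 + m - d) else (q.1 + d - m, q.1)) ?_)
  · rintro ⟨i, j⟩ hp
    simp only [mem_coe, mem_cycleCut] at hp ⊢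
    split_ifs <;> grind
  · rintro ⟨i, j⟩ hp
    simp only [mem_coe, mem_cycleCut] at hp
    have hdm : d ≤ m - d := Nat.le_sub_of_add_le (two_mul d ▸ hm)
    dsimp only
    split_ifs <;> dsimp only at * <;> simp only [Prod.mk.injEq, true_and, and_true] <;> omega

-- For `n ≤ 2 * d + 1`, `C_n^d` is complete.
theorem card_mul_card_le_card_cycleCut {n d : ℕ} (hn : n ≤ 2 * d + 1) (x : ℕ → α) (c : α) :
    #{i ∈ range n | x i = c} * #{i ∈ range n | x i ≠ c} ≤ #(cycleCut n d x) := by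
  rw [← card_product]
  refine card_le_card_of_injOn (fun p => (min p.1 p.2, max p.1 p.2)) ?_ ?_
  · rintro ⟨a, b⟩ hp
    simp only [coe_product, coe_filter, mem_range, Set.mem_prod, Set.mem_ofPred_eq, mem_coe,
      mem_cycleCut] at hp ⊢
    grind
  · rintro ⟨a, b⟩ hp ⟨a', b'⟩ hp' h
    simp only [coe_product, coe_filter, mem_range, Set.mem_prod, Set.mem_ofPred_eq,
      Prod.mk.injEq] at hp hp' h
    grind

/-- The cut edges `(i, j)` with `j - i ≤ d` and those with `n - (j - i) ≤ d` fill two complementary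
triangles of `range d ×ˢ range (d + 1)`. -/
theorem card_cycleCut_le_of_arcs {n d h : ℕ} {x : ℕ → α}
    (hx : ∀ i j, i < j → j < n → x i ≠ x j → i < h ∧ h ≤ j) : #(cycleCut n d x) ≤ d * (d + 1) := by
  rw [show d * (d + 1) = #(range d ×ˢ range (d + 1)) by simp]
  refine card_le_card_of_injOn
    (fun p => if p.2 ≤ p.1 + d then (h - 1 - p.1, p.2 - h) else (p.2 + d - n, d - p.1)) ?_
    (Set.LeftInvOn.injOn (f₁' := fun q => if q.1 + q.2 < d then (h - 1 - q.1, h + q.2)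
      else (d - q.2, n + q.1 - d)) ?_)
  · rintro ⟨i, j⟩ hp
    simp only [mem_coe, mem_cycleCut] at hp
    have harcs := hx i j hp.2.1 hp.1 hp.2.2.2
    simp only [coe_product, coe_range, Set.mem_prod, Set.mem_Iio]
    split_ifs <;> grind
  · rintro ⟨i, j⟩ hp
    simp only [mem_coe, mem_cycleCut] at hp
    have harcs := hx i j hp.2.1 hp.1 hp.2.2.2
    dsimp only
    split_ifs <;> grind

end CycleCut

section Graph

variable {V W : Type*}

theorem mk_mem_bichromatic {G : SimpleGraph V} {f : V → Fin 2} {u v : V} :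
    s(u, v) ∈ bichromatic G f ↔ G.Adj u v ∧ f u ≠ f v :=
  Iff.rfl

theorem mixedCount_comp_iso {G : SimpleGraph V} {H : SimpleGraph W} (φ : G ≃g H) (f : W → Fin 2) :
    mixedCount G (f ∘ φ) = mixedCount H f := by
  have : bichromatic G (f ∘ φ) = Sym2.map φ ⁻¹' bichromatic H f := by
    ext e
    induction e using Sym2.ind
    simp [mk_mem_bichromatic, φ.map_adj_iff]
  rw [mixedCount, mixedCount, this, Set.ncard_preimage_of_injective_subset_range
    (Sym2.map.injective φ.injective)]
  intro e _
  exact ⟨Sym2.map φ.symm e, by simp [Sym2.map_map]⟩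

end Graph

section CyclePow

def cyclePowAddRight (n d : ℕ) (r : ZMod n) : cyclePow n d ≃g cyclePow n d where
  toEquiv := Equiv.addRight r
  map_rel_iff' := by
    intro u v
    simp [cyclePow, add_right_comm _ r]

theorem cyclePow_adj_natCast_iff {n d i j : ℕ} (hd : d < n) (hij : i < j) (hj : j < n) :
    (cyclePow n d).Adj i j ↔ j ≤ i + d ∨ n + i ≤ j + d := by
  have hi := hij.trans hj
  simp only [cyclePow, ne_eq, ← Nat.cast_add, ZMod.natCast_eq_natCast_iff', Nat.add_mod_eq_ite,
    Nat.mod_eq_of_lt hj, Nat.mod_eq_of_lt hi]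
  constructor
  · rintro ⟨-, k, hk1, hkd, h⟩
    rw [Nat.mod_eq_of_lt (by omega : k < n)] at h
    split_ifs at h <;> omega
  · rintro h
    refine ⟨by omega, ?_⟩
    rcases h with h | h
    · refine ⟨j - i, by omega, by omega, Or.inl ?_⟩
      rw [Nat.mod_eq_of_lt (by omega)]
      split_ifs <;> omega
    · refine ⟨n + i - j, by omega, by omega, Or.inr ?_⟩
      rw [Nat.mod_eq_of_lt (by omega)]
      split_ifs <;> omega

theorem mk_mem_bichromatic_cyclePow_iff {n d i j : ℕ} (hd : d < n) (hij : i < j) (hj : j < n)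
    (f : ZMod n → Fin 2) :
    s((i : ZMod n), (j : ZMod n)) ∈ bichromatic (cyclePow n d) f ↔
      (i, j) ∈ cycleCut n d (fun k => f k) := by
  rw [mk_mem_bichromatic, cyclePow_adj_natCast_iff hd hij hj, mem_cycleCut]
  simp only [hj, hij, true_and]

theorem mixedCount_cyclePow {n d : ℕ} (hd : d < n) (f : ZMod n → Fin 2) :
    mixedCount (cyclePow n d) f = #(cycleCut n d (fun i => f i)) := by
  have : NeZero n := ⟨by omega⟩
  have hcast : ∀ {i j : ℕ}, i < n → j < n → ((i : ZMod n) = j ↔ i = j) := fun hi hj => by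
    rw [ZMod.natCast_eq_natCast_iff', Nat.mod_eq_of_lt hi, Nat.mod_eq_of_lt hj]
  have himage : bichromatic (cyclePow n d) f =
      (cycleCut n d (fun i => f i)).image (fun p => s((p.1 : ZMod n), (p.2 : ZMod n))) := by
    ext e
    induction e using Sym2.ind with | h u v => ?_
    rw [coe_image]
    constructor
    · intro he
      have huv : (cyclePow n d).Adj u v := he.1
      rw [← ZMod.natCast_zmod_val u, ← ZMod.natCast_zmod_val v] at he ⊢
      rcases lt_or_gt_of_ne (fun h => huv.ne (ZMod.val_injective n h)) with h | h
      · exact ⟨_, (mk_mem_bichromatic_cyclePow_iff hd h (ZMod.val_lt v) f).1 he, rfl⟩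
      · rw [Sym2.eq_swap] at he ⊢
        exact ⟨_, (mk_mem_bichromatic_cyclePow_iff hd h (ZMod.val_lt u) f).1 he, rfl⟩
    · rintro ⟨⟨i, j⟩, hp, hpe⟩
      rw [← hpe]
      have hp' := mem_cycleCut.1 hp
      exact (mk_mem_bichromatic_cyclePow_iff hd hp'.2.1 hp'.1 f).2 hp
  rw [mixedCount, himage, Set.ncard_coe_finset, card_image_of_injOn]
  rintro ⟨i, j⟩ hp ⟨i', j'⟩ hp' h
  simp only [mem_coe, mem_cycleCut] at hp hp'
  simp only [Sym2.eq_iff, hcast (hp.2.1.trans hp.1) (hp'.2.1.trans hp'.1), hcast hp.1 hp'.1,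
    hcast (hp.2.1.trans hp.1) hp'.1, hcast hp.1 (hp'.2.1.trans hp'.1)] at h
  simp only [Prod.mk.injEq]
  omega

end CyclePow

section Counting

variable {V : Type*} [Fintype V]

theorem card_filter_ne_zero_eq_card_filter_eq_one (f : V → Fin 2) :
    #{v | f v ≠ 0} = #{v | f v = 1} :=
  congrArg card (filter_congr fun _ _ => ⟨Fin.eq_one_of_ne_zero _, fun h => h ▸ one_ne_zero⟩)

theorem card_filter_zero_add_card_filter_one (f : V → Fin 2) :
    #{v | f v = 0} + #{v | f v = 1} = Fintype.card V := by
  rw [← card_filter_ne_zero_eq_card_filter_eq_one, card_filter_add_card_filter_not, card_univ]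

theorem card_filter_add_right {G : Type*} [AddGroup G] [Fintype G] (p : G → Prop)
    [DecidablePred p] (a : G) : #{u | p (u + a)} = #{u | p u} := by
  simp only [card_filter]
  exact Fintype.sum_equiv (Equiv.addRight a) _ _ fun _ => rfl

theorem card_filter_range_natCast {n : ℕ} [NeZero n] (p : ZMod n → Prop) [DecidablePred p] :
    #{i ∈ range n | p ((i : ℕ) : ZMod n)} = #{u | p u} := by
  refine card_nbij' (fun i => (i : ZMod n)) ZMod.val ?_ ?_ ?_ ?_ <;>
    intro a ha <;> simp_all [Nat.mod_eq_of_lt, ZMod.val_lt]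

end Counting

-- `g` is `f` rotated so that `v` comes last, with that last vertex deleted.
theorem exists_mixedCount_cyclePow_le_succ {n d : ℕ} [NeZero n] (hn : 2 * d ≤ n)
    (f : ZMod (n + 1) → Fin 2) (v : ZMod (n + 1)) :
    ∃ g : ZMod n → Fin 2, mixedCount (cyclePow n d) g ≤ mixedCount (cyclePow (n + 1) d) f ∧
      ∀ c, #{u | g u = c} + (if f v = c then 1 else 0) = #{u | f u = c} := by
  have hd : d < n := by have := NeZero.pos n; omega
  set f' := f ∘ cyclePowAddRight (n + 1) d (v + 1)
  have hlast : f' n = f v := by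
    have : ((n + 1 : ℕ) : ZMod (n + 1)) = 0 := ZMod.natCast_self _
    change f (n + (v + 1)) = f v
    congr 1
    push_cast at this
    linear_combination this
  refine ⟨fun u => f' u.val, ?_, fun c => ?_⟩
  · calc mixedCount (cyclePow n d) (fun u => f' u.val)
        = #(cycleCut n d (fun i => f' i)) := by
          rw [mixedCount_cyclePow hd]
          exact congrArg card (cycleCut_congr fun i hi => by rw [ZMod.val_cast_of_lt hi])
      _ ≤ #(cycleCut (n + 1) d (fun i => f' i)) := card_cycleCut_le_succ hn _
      _ = mixedCount (cyclePow (n + 1) d) f := by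
          rw [← mixedCount_cyclePow (by omega), mixedCount_comp_iso]
  · have hg : #{u : ZMod n | f' u.val = c} = #{i ∈ range n | f' (i : ℕ) = c} := by
      rw [← card_filter_range_natCast]
      exact congrArg card (filter_congr fun i hi => by rw [ZMod.val_cast_of_lt (mem_range.1 hi)])
    have hf : #{u | f u = c} = #{i ∈ range (n + 1) | f' (i : ℕ) = c} := by
      rw [card_filter_range_natCast (fun u => f' u = c)]
      exact (card_filter_add_right (fun u => f u = c) (v + 1)).symm
    rw [hg, hf, range_add_one, filter_insert, ← hlast]
    split_ifs <;> simp

theorem le_mixedCount_cyclePow {n d : ℕ} [NeZero n] (hn : 2 * d + 1 ≤ n) (f : ZMod n → Fin 2)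
    (hf : ∀ c, d ≤ #{v | f v = c}) : d * (d + 1) ≤ mixedCount (cyclePow n d) f := by
  revert f
  revert ‹NeZero n›
  induction n, hn using Nat.le_induction with
  | base =>
    intro _ f hf
    have hsum := card_filter_zero_add_card_filter_one f
    rw [ZMod.card] at hsum
    have h0 := hf 0
    have h1 := hf 1
    calc d * (d + 1) ≤ #{v | f v = 0} * #{v | f v = 1} := by nlinarith
      _ = #{i ∈ range (2 * d + 1) | f (i : ℕ) = 0} * #{i ∈ range (2 * d + 1) | f (i : ℕ) ≠ 0} := by
        rw [card_filter_range_natCast (fun v => f v = 0),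
          card_filter_range_natCast (fun v => f v ≠ 0), card_filter_ne_zero_eq_card_filter_eq_one]
      _ ≤ #(cycleCut (2 * d + 1) d fun i => f i) := card_mul_card_le_card_cycleCut le_rfl _ 0
      _ = mixedCount (cyclePow (2 * d + 1) d) f := (mixedCount_cyclePow (by omega) f).symm
  | succ n hn ih =>
    intro _ f hf
    have : NeZero n := ⟨by omega⟩
    obtain ⟨c, hc⟩ := Fintype.exists_lt_card_fiber_of_mul_lt_card f (n := d)
      (by simp only [Fintype.card_fin, ZMod.card]; omega)
    obtain ⟨v, -, hv⟩ := filter_nonempty_iff.1 (card_pos.1 (hc.trans_le' d.zero_le))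
    obtain ⟨g, hg, hcard⟩ := exists_mixedCount_cyclePow_le_succ (by omega : 2 * d ≤ n) f v
    refine (ih g fun c' => ?_).trans hg
    have hsplit := hcard c'
    have hfc' := hf c'
    split_ifs at hsplit with hvc'
    · rw [hv] at hvc'
      subst hvc'
      omega
    · omega

theorem balancedColoring_iff {V : Type*} [Fintype V] (f : V → Fin 2) :
    BalancedColoring f ↔
      #{v | f v = 0} ≤ #{v | f v = 1} + 1 ∧ #{v | f v = 1} ≤ #{v | f v = 0} + 1 := by
  simp only [BalancedColoring, Nat.card_eq_fintype_card, Set.coe_ofPred, Fintype.card_subtype]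
  omega

theorem BalancedColoring.card_le {V : Type*} [Fintype V] {f : V → Fin 2} (hf : BalancedColoring f)
    (c : Fin 2) : Fintype.card V ≤ 2 * #{v | f v = c} + 1 := by
  rw [balancedColoring_iff] at hf
  have := card_filter_zero_add_card_filter_one f
  fin_cases c <;> simp <;> omega

theorem exists_balancedColoring_mixedCount_cyclePow_le {n d : ℕ} (hd : d < n) :
    ∃ f : ZMod n → Fin 2, BalancedColoring f ∧ mixedCount (cyclePow n d) f ≤ d * (d + 1) := by
  have : NeZero n := ⟨by omega⟩
  refine ⟨fun v => if v.val < n / 2 then 0 else 1, ?_, ?_⟩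
  · have h₀ : #{v : ZMod n | (if v.val < n / 2 then 0 else 1 : Fin 2) = 0} = n / 2 := by
      rw [← card_filter_range_natCast]
      convert card_range (n / 2) using 2
      ext i
      simp only [mem_filter, mem_range]
      grind [ZMod.val_cast_of_lt]
    have := card_filter_zero_add_card_filter_one (fun v : ZMod n => if v.val < n / 2 then 0 else 1)
    rw [ZMod.card] at this
    rw [balancedColoring_iff]
    omega
  · rw [mixedCount_cyclePow hd]
    refine card_cycleCut_le_of_arcs (h := n / 2) fun i j hij hj hne => ?_
    simp only [ZMod.val_cast_of_lt hj, ZMod.val_cast_of_lt (hij.trans hj)] at hne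
    split_ifs at hne <;> omega

theorem stmt4_general (d n : ℕ) (hn : 2 * d + 1 ≤ n) :
    rna (cyclePow n d) = d * (d + 1) := by
  have : NeZero n := ⟨by omega⟩
  obtain ⟨f₀, hf₀, hcut⟩ := exists_balancedColoring_mixedCount_cyclePow_le (by omega : d < n)
  have hf₀' : mixedCount (cyclePow n d) f₀ ∈
      {k | ∃ f : ZMod n → Fin 2, BalancedColoring f ∧ mixedCount (cyclePow n d) f = k} :=
    ⟨f₀, hf₀, rfl⟩
  refine le_antisymm ((Nat.sInf_le hf₀').trans hcut) (le_csInf ⟨_, hf₀'⟩ ?_)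
  rintro k ⟨f, hf, rfl⟩
  refine le_mixedCount_cyclePow hn f fun c => ?_
  have := hf.card_le c
  rw [ZMod.card] at this
  omega

theorem stmt4 (d n : ℕ) (hd : 2 ≤ d) (hn : 2 * d + 1 ≤ n) :
    rna (cyclePow n d) = d * (d + 1) :=
  stmt4_general d n hn
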